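/- Let C be a bounded convex polygonal region in the plane (the canonical hull) and let p be a point strictly outside C and above its upper boundary. Suppose e_v is a point outside C that is extremal for some upward direction v among a set of points, meaning ⟨e_v, v⟩ is maximal. Then e_v does not lie in the pencil pen(p) of any other point p outside C: if e_v ∈ pen(p), then some vertex of pen(p) (either p itself or a vertex of C) would satisfy ⟨·, v⟩ > ⟨e_v, v⟩, a contradiction, provided all vertices of C lie on or below the line ℓ_v normal to v through the region boundary and e_v lies strictly above ℓ_v. -/
import Mathlib


/-- `z` lies strictly below the line through `a` and `b` (for `a.1 < b.1`). -/
def StrictlyBelowLine (a b z : ℝ × ℝ) : Prop :=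
  (b.1 - a.1) * (z.2 - a.2) < (b.2 - a.2) * (z.1 - a.1)

/-- Scalar product of a planar point with a direction. -/
def dot2 (a v : ℝ × ℝ) : ℝ := a.1 * v.1 + a.2 * v.2

/-- The pencil of a point `p` outside the canonical hull, with tangency vertices `a₁`
(left) and `a₂` (right): the region inside the vertical pencil slab `[x(a₁), x(a₂)]`
lying strictly below the two tangent segments `a₁p` and `pa₂`. -/
def InPencil (a₁ p a₂ z : ℝ × ℝ) : Prop :=
  a₁.1 ≤ z.1 ∧ z.1 ≤ a₂.1 ∧
  (z.1 ≤ p.1 → StrictlyBelowLine a₁ p z) ∧ (p.1 ≤ z.1 → StrictlyBelowLine p a₂ z)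

/-- (Claim `clm:no_pencil_overlap`.)  Let `v` be an upward direction,
`p` a point outside the canonical hull `C` with pencil determined by the tangency
vertices `a₁, a₂` of `C`, and `e_v` a point extremal for `v` (in particular
`⟨p, v⟩ ≤ ⟨e_v, v⟩`).  If all vertices of `C` lie on or below the line `ℓ_v` normal to
`v` (value `t`) while `e_v` lies strictly above `ℓ_v`, then `e_v` does not lie in the
pencil of `p`: otherwise some vertex of `pen(p)` (either `p` itself or a vertex of `C`)
would satisfy `⟨·, v⟩ > ⟨e_v, v⟩`, a contradiction. -/
theorem stmt13 (v a₁ a₂ p ev : ℝ × ℝ) (t : ℝ)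
    (hv : 0 < v.2)
    (hx1 : a₁.1 < p.1) (hx2 : p.1 < a₂.1)
    (hextremal : dot2 p v ≤ dot2 ev v)
    (ha₁ : dot2 a₁ v ≤ t) (ha₂ : dot2 a₂ v ≤ t)
    (hev : t < dot2 ev v) :
    ¬ InPencil a₁ p a₂ ev := by
  rintro ⟨h1, h2, hL, hR⟩
  unfold dot2 at *
  rcases le_total ev.1 p.1 with hc | hc
  · have hb := hL hc
    unfold StrictlyBelowLine at hb
    nlinarith [mul_pos hv (sub_pos.mpr (lt_of_le_of_lt ha₁ hev)),
      mul_nonneg (sub_nonneg.mpr hc) (sub_nonneg.mpr (ha₁.trans hev.le)),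
      mul_nonneg (sub_nonneg.mpr h1) (sub_nonneg.mpr hextremal),
      mul_pos hv (sub_pos.mpr hx1)]
  · have hb := hR hc
    unfold StrictlyBelowLine at hb
    nlinarith [mul_pos hv (sub_pos.mpr (lt_of_le_of_lt ha₂ hev)),
      mul_nonneg (sub_nonneg.mpr hc) (sub_nonneg.mpr (ha₂.trans hev.le)),
      mul_nonneg (sub_nonneg.mpr h2) (sub_nonneg.mpr hextremal),
      mul_pos hv (sub_pos.mpr hx2)]
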